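/- arXiv:1101.3229 — 3 statements merged into one kernel-verified Lean document; each statement's English description precedes it below -/
import Mathlib

section
/- Kullback–Leibler bound for the uniform restriction to an ℓ1-ball on a simplex face. Fix I ⊆ {1,…,p}, an integer 1 ≤ M ≤ n, and η ∈ (0, 1/n]. Let ρ¹_{I,M,η} be the probability measure on S^p_{1,+}(I) with density with respect to μ_I proportional to the indicator 1[‖θ − θ*_{I,M}‖₁ ≤ η]. Then K(ρ¹_{I,M,η}, μ_I) ≤ (|I| − 1) · log( max(|I|, 4/η) ). -/
open MeasureTheory Finset Set

/-- `S^p_{1,+}`: vectors `θ ∈ ℝ^p` with `‖θ‖₁ = 1` whose first nonzero coordinate is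
positive. -/
def Sp1plus (p : ℕ) : Set (Fin p → ℝ) :=
  {θ | (∑ j, |θ j| = 1) ∧ ∃ j, 0 < θ j ∧ ∀ i, i < j → θ i = 0}

/-- The face `S^p_{1,+}(I)` of `S^p_{1,+}` whose active coordinates are exactly `I`. -/
def SfaceI (p : ℕ) (I : Finset (Fin p)) : Set (Fin p → ℝ) :=
  {θ ∈ Sp1plus p | ∀ j, θ j ≠ 0 ↔ j ∈ I}

/-- The uniform probability measure `μ_I` on `S^p_{1,+}(I)`: normalized
`(|I|−1)`-dimensional Hausdorff measure restricted to the face. -/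
noncomputable def muFace (p : ℕ) (I : Finset (Fin p)) : Measure (Fin p → ℝ) :=
  ((μH[(I.card : ℝ) - 1]) (SfaceI p I))⁻¹ • (μH[(I.card : ℝ) - 1]).restrict (SfaceI p I)

/-- The Kullback–Leibler divergence, as an extended real: `∫ log (dm/dμ) dm` if `m ≪ μ`
(with value `+∞` if the integral diverges), and `+∞` otherwise. -/
noncomputable def klDivE {E : Type*} [MeasurableSpace E] (m μ : Measure E) : EReal :=
  open Classical in
  if m ≪ μ ∧ Integrable (llr m μ) m then ((∫ x, llr m μ x ∂m : ℝ) : EReal) else ⊤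

/-! For a finite measure `μ` and a set `A` of positive mass, the normalized restriction `μ[|A]`
has density `μ(A)⁻¹` on `A`, so its Kullback–Leibler divergence from `μ` is `-log μ(A)`. It thus
suffices to show `μ_I(A) ≥ (η/4)^(|I|-1)` for the ℓ1-ball `A` of radius `η` around `θ*`.
Changing the signs of coordinates in `I` other than the first one is an isometry of the face, and
`2^(|I|-1)` such sign changes cover the face by copies of the piece of points having the sign
pattern of `θ*`. The homothety of ratio `η/2` centred at `θ*` maps this piece into `A ∩ face`
(same-sign convex combinations keep `‖·‖₁ = 1`) and multiplies its `(|I|-1)`-dimensional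
Hausdorff measure by `(η/2)^(|I|-1)`. -/

open ProbabilityTheory
open scoped ENNReal

section KullbackLeibler

variable {E : Type*} [MeasurableSpace E] {μ : Measure E} {A : Set E}

lemma klDivE_zero_left (μ : Measure E) : klDivE 0 μ = 0 := by
  rw [klDivE, if_pos ⟨Measure.AbsolutelyContinuous.zero _, integrable_zero_measure⟩,
    integral_zero_measure, EReal.coe_zero]

lemma klDivE_cond_self [IsFiniteMeasure μ] (hA : MeasurableSet A) (hA0 : μ A ≠ 0) :
    klDivE μ[|A] μ = ((-Real.log (μ A).toReal : ℝ) : EReal) := by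
  have := cond_isProbabilityMeasure (μ := μ) hA0
  have hrn : (μ[|A]).rnDeriv μ =ᵐ[μ] A.indicator fun _ ↦ (μ A)⁻¹ := by
    rw [ProbabilityTheory.cond, ← withDensity_const, ← withDensity_indicator hA]
    exact Measure.rnDeriv_withDensity _ (measurable_const.indicator hA)
  have hllr : llr μ[|A] μ =ᵐ[μ[|A]] fun _ ↦ -Real.log (μ A).toReal := by
    filter_upwards [cond_absolutelyContinuous.ae_le hrn, ae_cond_mem hA] with x hx hxA
    rw [llr, hx, Set.indicator_of_mem hxA, ENNReal.toReal_inv, Real.log_inv]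
  rw [klDivE, if_pos ⟨cond_absolutelyContinuous, (integrable_const _).congr hllr.symm⟩,
    integral_congr_ae hllr, integral_const, probReal_univ, one_smul]

end KullbackLeibler

lemma neg_log_le_mul_log_of_inv_rpow_le {x c d : ℝ} (hx : 0 < x) (h : x⁻¹ ^ d ≤ c) :
    -Real.log c ≤ d * Real.log x := by
  have := Real.log_le_log (by positivity) h
  rw [Real.log_rpow (by positivity), Real.log_inv] at this
  linarith

lemma abs_lineMap_of_mul_nonneg {a b t : ℝ} (ht0 : 0 ≤ t) (ht1 : t ≤ 1) (hab : 0 ≤ a * b) :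
    |(1 - t) * a + t * b| = (1 - t) * |a| + t * |b| := by
  have h1t : 0 ≤ 1 - t := sub_nonneg.mpr ht1
  rw [(abs_add_eq_add_abs_iff _ _).mpr, abs_mul, abs_mul, abs_of_nonneg ht0,
    abs_of_nonneg h1t]
  rcases mul_nonneg_iff.mp hab with ⟨ha, hb⟩ | ⟨ha, hb⟩
  · exact .inl ⟨mul_nonneg h1t ha, mul_nonneg ht0 hb⟩
  · exact .inr ⟨mul_nonpos_of_nonneg_of_nonpos h1t ha, mul_nonpos_of_nonneg_of_nonpos ht0 hb⟩

def flipSigns {ι : Type*} [DecidableEq ι] (T : Finset ι) (θ : ι → ℝ) : ι → ℝ :=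
  fun j ↦ if j ∈ T then -θ j else θ j

section FlipSigns

variable {ι : Type*} [DecidableEq ι] (T : Finset ι)

lemma flipSigns_involutive : Function.Involutive (flipSigns T) := fun θ ↦ by
  funext j; unfold flipSigns; split_ifs <;> simp

@[simp]
lemma abs_flipSigns (θ : ι → ℝ) (j : ι) : |flipSigns T θ j| = |θ j| := by
  unfold flipSigns; split_ifs <;> simp

lemma flipSigns_apply_of_notMem (θ : ι → ℝ) {j : ι} (hj : j ∉ T) : flipSigns T θ j = θ j :=
  if_neg hj

lemma isometry_flipSigns [Fintype ι] : Isometry (flipSigns T) :=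
  Isometry.of_dist_eq fun x y ↦ by
    simp only [dist_pi_def]
    congr 1
    refine Finset.sup_congr rfl fun j _ ↦ ?_
    unfold flipSigns; split_ifs <;> simp [nndist_neg_neg]

end FlipSigns

section Face

variable {p : ℕ} {I : Finset (Fin p)} {θ θs : Fin p → ℝ}

lemma nonempty_of_mem_SfaceI (hθ : θ ∈ SfaceI p I) : I.Nonempty :=
  let ⟨⟨_, j, hj, _⟩, hsupp⟩ := hθ
  ⟨j, (hsupp j).mp hj.ne'⟩

lemma mem_SfaceI_iff (hI : I.Nonempty) :
    θ ∈ SfaceI p I ↔ (∑ j, |θ j| = 1) ∧ (∀ j, θ j ≠ 0 ↔ j ∈ I) ∧ 0 < θ (I.min' hI) := by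
  constructor
  · rintro ⟨⟨hsum, j, hj, hlt⟩, hsupp⟩
    refine ⟨hsum, hsupp, ?_⟩
    rcases (I.min'_le j ((hsupp j).mp hj.ne')).eq_or_lt with h | h
    · rwa [h]
    · exact absurd (hlt _ h) ((hsupp _).mpr (I.min'_mem hI))
  · rintro ⟨hsum, hsupp, hpos⟩
    exact ⟨⟨hsum, I.min' hI, hpos, fun i hi ↦ not_not.mp fun h ↦
      (I.min'_le i ((hsupp i).mp h)).not_gt hi⟩, hsupp⟩

lemma flipSigns_mem_SfaceI {T : Finset (Fin p)} (hI : I.Nonempty) (hT : I.min' hI ∉ T)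
    (hθ : θ ∈ SfaceI p I) : flipSigns T θ ∈ SfaceI p I := by
  obtain ⟨hsum, hsupp, hpos⟩ := (mem_SfaceI_iff hI).mp hθ
  refine (mem_SfaceI_iff hI).mpr ⟨by simpa using hsum, fun j ↦ ?_, ?_⟩
  · rw [← hsupp j, ← abs_ne_zero, abs_flipSigns, abs_ne_zero]
  · rwa [flipSigns_apply_of_notMem T θ hT]

def faceOrthant (p : ℕ) (I : Finset (Fin p)) (θs : Fin p → ℝ) : Set (Fin p → ℝ) :=
  {θ ∈ SfaceI p I | ∀ j, 0 ≤ θ j * θs j}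

lemma SfaceI_subset_biUnion_flipSigns_faceOrthant (hθs : θs ∈ SfaceI p I) :
    SfaceI p I ⊆ ⋃ T ∈ (I.erase (I.min' (nonempty_of_mem_SfaceI hθs))).powerset,
      flipSigns T '' faceOrthant p I θs := by
  set hI := nonempty_of_mem_SfaceI hθs
  intro θ hθ
  set T := univ.filter fun j ↦ θ j * θs j < 0
  have hTsub : T ⊆ I.erase (I.min' hI) := by
    intro j hj
    have hneg : θ j * θs j < 0 := (mem_filter.mp hj).2
    refine mem_erase.mpr ⟨?_, (hθ.2 j).mp (left_ne_zero_of_mul hneg.ne)⟩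
    rintro rfl
    exact hneg.not_ge (mul_pos ((mem_SfaceI_iff hI).mp hθ).2.2
      ((mem_SfaceI_iff hI).mp hθs).2.2).le
  refine mem_biUnion (mem_powerset.mpr hTsub) ⟨flipSigns T θ,
    ⟨flipSigns_mem_SfaceI hI (fun h ↦ by simpa using hTsub h) hθ, fun j ↦ ?_⟩,
    flipSigns_involutive T θ⟩
  unfold flipSigns
  split_ifs with hj
  · nlinarith [(mem_filter.mp hj).2]
  · simpa [T] using hj

lemma homothety_apply_apply {ι : Type*} (c x : ι → ℝ) (t : ℝ) (j : ι) :
    AffineMap.homothety c t x j = (1 - t) * c j + t * x j := by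
  simp only [AffineMap.homothety_apply, vsub_eq_sub, vadd_eq_add, Pi.add_apply, Pi.smul_apply,
    Pi.sub_apply, smul_eq_mul]
  ring

lemma homothety_mem_SfaceI (hθs : θs ∈ SfaceI p I) {t : ℝ} (ht0 : 0 ≤ t) (ht1 : t ≤ 1)
    (hθ : θ ∈ faceOrthant p I θs) : AffineMap.homothety θs t θ ∈ SfaceI p I := by
  have hI := nonempty_of_mem_SfaceI hθs
  obtain ⟨hsum, hsupp, hpos⟩ := (mem_SfaceI_iff hI).mp hθ.1
  obtain ⟨hsum_s, hsupp_s, hpos_s⟩ := (mem_SfaceI_iff hI).mp hθs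
  have h1t : 0 ≤ 1 - t := sub_nonneg.mpr ht1
  have habs (j : Fin p) :
      |AffineMap.homothety θs t θ j| = (1 - t) * |θs j| + t * |θ j| := by
    rw [homothety_apply_apply,
      abs_lineMap_of_mul_nonneg ht0 ht1 (by linarith [hθ.2 j, mul_comm (θ j) (θs j)])]
  refine (mem_SfaceI_iff hI).mpr ⟨?_, fun j ↦ ?_, ?_⟩
  · simp only [habs, sum_add_distrib, ← mul_sum, hsum, hsum_s]
    ring
  · by_cases hj : j ∈ I
    · rw [← abs_ne_zero, habs, iff_true_intro hj, iff_true]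
      exact (convex_Ioi (0 : ℝ) (abs_pos.mpr ((hsupp_s j).mpr hj))
        (abs_pos.mpr ((hsupp j).mpr hj)) h1t ht0 (by ring)).ne'
    · have hθj : θ j = 0 := by simpa using (hsupp j).not.mpr hj
      have hθsj : θs j = 0 := by simpa using (hsupp_s j).not.mpr hj
      simp [homothety_apply_apply, hθj, hθsj, hj]
  · rw [homothety_apply_apply]
    exact convex_Ioi (0 : ℝ) hpos_s hpos h1t ht0 (by ring)

lemma l1_dist_homothety_le (hθs : θs ∈ SfaceI p I) (hθ : θ ∈ SfaceI p I) {t : ℝ}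
    (ht0 : 0 ≤ t) : ∑ j, |AffineMap.homothety θs t θ j - θs j| ≤ 2 * t := by
  have hdist (j : Fin p) : |AffineMap.homothety θs t θ j - θs j| = t * |θ j - θs j| := by
    rw [homothety_apply_apply, show (1 - t) * θs j + t * θ j - θs j = t * (θ j - θs j) by ring,
      abs_mul, abs_of_nonneg ht0]
  calc ∑ j, |AffineMap.homothety θs t θ j - θs j| = t * ∑ j, |θ j - θs j| := by
        simp only [hdist, mul_sum]
    _ ≤ t * ∑ j, (|θ j| + |θs j|) := by gcongr with j; exact abs_sub _ _
    _ = 2 * t := by rw [sum_add_distrib, hθ.1.1, hθs.1.1]; ring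

lemma homothety_image_faceOrthant_subset (hθs : θs ∈ SfaceI p I) {η : ℝ} (hη0 : 0 ≤ η)
    (hη2 : η ≤ 2) :
    AffineMap.homothety θs (η / 2) '' faceOrthant p I θs ⊆
      {θ | ∑ j, |θ j - θs j| ≤ η} ∩ SfaceI p I := by
  rintro _ ⟨θ, hθ, rfl⟩
  refine ⟨?_, homothety_mem_SfaceI hθs (by positivity) (by linarith) hθ⟩
  exact (l1_dist_homothety_le hθs hθ.1 (by positivity)).trans_eq (mul_div_cancel₀ η two_ne_zero)

lemma hausdorffMeasure_SfaceI_le (hθs : θs ∈ SfaceI p I) :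
    μH[(I.card : ℝ) - 1] (SfaceI p I) ≤
      2 ^ ((I.card : ℝ) - 1) * μH[(I.card : ℝ) - 1] (faceOrthant p I θs) := by
  have hI := nonempty_of_mem_SfaceI hθs
  calc μH[(I.card : ℝ) - 1] (SfaceI p I)
      ≤ ∑ T ∈ (I.erase (I.min' hI)).powerset,
          μH[(I.card : ℝ) - 1] (flipSigns T '' faceOrthant p I θs) :=
        (measure_mono (SfaceI_subset_biUnion_flipSigns_faceOrthant hθs)).trans
          (measure_biUnion_finset_le _ _)
    _ = 2 ^ ((I.card : ℝ) - 1) * μH[(I.card : ℝ) - 1] (faceOrthant p I θs) := by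
        have hflip (T : Finset (Fin p)) :
            μH[(I.card : ℝ) - 1] (flipSigns T '' faceOrthant p I θs) =
              μH[(I.card : ℝ) - 1] (faceOrthant p I θs) :=
          (isometry_flipSigns T).hausdorffMeasure_image
            (.inr (flipSigns_involutive T).surjective) _
        simp only [hflip, sum_const, card_powerset,
          card_erase_of_mem (I.min'_mem hI), nsmul_eq_mul]
        rw [← Nat.cast_pred hI.card_pos, ENNReal.rpow_natCast]
        norm_cast

lemma ofReal_rpow_mul_hausdorffMeasure_SfaceI_le (hθs : θs ∈ SfaceI p I) {η : ℝ}
    (hη : 0 < η) (hη2 : η ≤ 2) :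
    ENNReal.ofReal (η / 4) ^ ((I.card : ℝ) - 1) * μH[(I.card : ℝ) - 1] (SfaceI p I) ≤
      μH[(I.card : ℝ) - 1] ({θ | ∑ j, |θ j - θs j| ≤ η} ∩ SfaceI p I) := by
  set d : ℝ := (I.card : ℝ) - 1
  have hd : 0 ≤ d := sub_nonneg.mpr (by exact_mod_cast (nonempty_of_mem_SfaceI hθs).card_pos)
  calc ENNReal.ofReal (η / 4) ^ d * μH[d] (SfaceI p I)
      ≤ ENNReal.ofReal (η / 4) ^ d * (2 ^ d * μH[d] (faceOrthant p I θs)) := by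
        gcongr; exact hausdorffMeasure_SfaceI_le hθs
    _ = ENNReal.ofReal (η / 2) ^ d * μH[d] (faceOrthant p I θs) := by
        rw [← mul_assoc, ← ENNReal.mul_rpow_of_nonneg _ _ hd, ← ENNReal.ofReal_ofNat 2,
          ← ENNReal.ofReal_mul (by positivity)]
        ring_nf
    _ = μH[d] (AffineMap.homothety θs (η / 2) '' faceOrthant p I θs) := by
        rw [hausdorffMeasure_homothety_image hd θs (by positivity : η / 2 ≠ 0), ENNReal.smul_def,
          smul_eq_mul, ENNReal.coe_rpow_of_nonneg _ hd, ← enorm_eq_nnnorm,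
          Real.enorm_eq_ofReal (by positivity)]
    _ ≤ μH[d] ({θ | ∑ j, |θ j - θs j| ≤ η} ∩ SfaceI p I) :=
        measure_mono (homothety_image_faceOrthant_subset hθs hη.le hη2)

end Face

lemma muFace_eq_cond (p : ℕ) (I : Finset (Fin p)) :
    muFace p I = μH[(I.card : ℝ) - 1][|SfaceI p I] := rfl

instance (p : ℕ) (I : Finset (Fin p)) : IsZeroOrProbabilityMeasure (muFace p I) := by
  rw [muFace_eq_cond]; infer_instance

lemma ofReal_rpow_le_muFace_l1Ball {p : ℕ} {I : Finset (Fin p)} {θs : Fin p → ℝ}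
    (hθs : θs ∈ SfaceI p I) {η : ℝ} (hη : 0 < η) (hη2 : η ≤ 2)
    (h0 : muFace p I {θ | ∑ j, |θ j - θs j| ≤ η} ≠ 0) :
    ENNReal.ofReal (η / 4) ^ ((I.card : ℝ) - 1) ≤ muFace p I {θ | ∑ j, |θ j - θs j| ≤ η} := by
  have hA : MeasurableSet {θ : Fin p → ℝ | ∑ j, |θ j - θs j| ≤ η} :=
    measurableSet_le (by fun_prop) measurable_const
  rw [muFace_eq_cond] at h0 ⊢
  obtain ⟨hs_top, hs_zero⟩ : μH[(I.card : ℝ) - 1] (SfaceI p I) ≠ ∞ ∧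
      μH[(I.card : ℝ) - 1] (SfaceI p I) ≠ 0 := by
    have hcond : μH[(I.card : ℝ) - 1][|SfaceI p I] ≠ 0 := fun h ↦ h0 (by rw [h]; rfl)
    simpa [not_or] using hcond
  rw [cond_apply' hA, ← ENNReal.mul_le_iff_le_inv hs_zero hs_top, mul_comm, Set.inter_comm]
  exact ofReal_rpow_mul_hausdorffMeasure_SfaceI_le hθs hη hη2

theorem kl_uniform_restriction_simplex_face_general
    (p n : ℕ) (I : Finset (Fin p))
    (η : ℝ) (hη : 0 < η) (hη' : η ≤ 1 / n)
    (θstarIM : Fin p → ℝ) (hθstar : θstarIM ∈ SfaceI p I) :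
    klDivE
        ((muFace p I {θ : Fin p → ℝ | ∑ j, |θ j - θstarIM j| ≤ η})⁻¹ •
          (muFace p I).restrict {θ : Fin p → ℝ | ∑ j, |θ j - θstarIM j| ≤ η})
        (muFace p I) ≤
      ((((I.card : ℝ) - 1) * Real.log (max (I.card : ℝ) (4 / η)) : ℝ) : EReal) := by
  set A := {θ : Fin p → ℝ | ∑ j, |θ j - θstarIM j| ≤ η}
  have hA : MeasurableSet A := measurableSet_le (by fun_prop) measurable_const
  have hd : 0 ≤ (I.card : ℝ) - 1 :=
    sub_nonneg.mpr (by exact_mod_cast (nonempty_of_mem_SfaceI hθstar).card_pos)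
  have hη1 : η ≤ 1 := by
    rcases n.eq_zero_or_pos with rfl | hn
    · rw [Nat.cast_zero, div_zero] at hη'
      linarith
    · exact hη'.trans (div_le_one_of_le₀ (by exact_mod_cast hn) n.cast_nonneg)
  have hlog : Real.log (4 / η) ≤ Real.log (max (I.card : ℝ) (4 / η)) :=
    Real.log_le_log (by positivity) (le_max_right _ _)
  change klDivE (muFace p I)[|A] (muFace p I) ≤ _
  -- `muFace p I` is the zero measure when `μH (SfaceI p I)` is `0` or `∞`.
  rcases eq_or_ne (muFace p I A) 0 with h0 | h0
  · rw [cond_eq_zero_of_meas_eq_zero h0, klDivE_zero_left]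
    have : 0 ≤ Real.log (4 / η) := Real.log_nonneg (by rw [le_div_iff₀ hη]; linarith)
    exact_mod_cast mul_nonneg hd (this.trans hlog)
  · have hlow : (4 / η)⁻¹ ^ ((I.card : ℝ) - 1) ≤ (muFace p I A).toReal := by
      rw [inv_div, ← ENNReal.toReal_ofReal (by positivity : 0 ≤ η / 4), ENNReal.toReal_rpow]
      exact ENNReal.toReal_mono (measure_ne_top _ _)
        (ofReal_rpow_le_muFace_l1Ball hθstar hη (by linarith) h0)
    rw [klDivE_cond_self hA h0]
    exact_mod_cast (neg_log_le_mul_log_of_inv_rpow_le (by positivity) hlow).trans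
      (mul_le_mul_of_nonneg_left hlog hd)

/-- **Kullback–Leibler bound for the uniform restriction to an ℓ1-ball on a simplex face.**
For `η ∈ (0, 1/n]` and `θ*_{I,M} ∈ S^p_{1,+}(I)`, the normalized restriction `ρ¹_{I,M,η}`
of `μ_I` to the ℓ1-ball `{‖θ − θ*_{I,M}‖₁ ≤ η}` satisfies
`K(ρ¹_{I,M,η}, μ_I) ≤ (|I| − 1) log (max (|I|, 4/η))`. -/
theorem kl_uniform_restriction_simplex_face
    (p n : ℕ) (hn : 1 ≤ n) (I : Finset (Fin p))
    (M : ℕ) (hM1 : 1 ≤ M) (hMn : M ≤ n)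
    (η : ℝ) (hη : 0 < η) (hη' : η ≤ 1 / n)
    (θstarIM : Fin p → ℝ) (hθstar : θstarIM ∈ SfaceI p I) :
    klDivE
        ((muFace p I {θ : Fin p → ℝ | ∑ j, |θ j - θstarIM j| ≤ η})⁻¹ •
          (muFace p I).restrict {θ : Fin p → ℝ | ∑ j, |θ j - θstarIM j| ≤ η})
        (muFace p I) ≤
      ((((I.card : ℝ) - 1) * Real.log (max (I.card : ℝ) (4 / η)) : ℝ) : EReal) :=
  kl_uniform_restriction_simplex_face_general p n I η hη hη' θstarIM hθstar
end

section
/- Second-moment bound for excess-loss variables. Suppose Assumptions N and B hold. Fix θ ∈ S^p_{1,+} and a measurable f: [−1,1] → ℝ with ‖f‖_∞ ≤ C+1, and set T_i = −(Y_i − f(θᵀX_i))² + (Y_i − f*(θ*ᵀX_i))² for i = 1,…,n. Then Σ_{i=1}^n E[T_i²] ≤ 2n · [(2C+1)² + 4σ²] · ( R(θ,f) − R(θ*, f*) ). -/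
/-!
Write `W = Y − f*(θ*ᵀX)` and `D = f*(θ*ᵀX) − f(θᵀX)`, so that `T = −(W + D)² + W² = −D(2W + D)`
with `D` a bounded function of `X`. Since `E[W | X] = 0`, every `X`-measurable multiple of `W`
integrates to zero; this gives `R(θ, f) − R(θ*, f*) = E[D²]` and kills the cross term in
`E[T²] = E[D⁴] + 4 E[D³W] + 4 E[D²W²]`. The remaining terms are bounded by `|D| ≤ 2C + 1` and by
`E[W² | X] ≤ σ²` (Assumption N with `k = 2`), so `E[T²] ≤ ((2C + 1)² + 4σ²) E[D²]`.
-/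

open MeasureTheory Finset Set

/-- The quadratic risk `R(θ, f) = E[(Y − f(θᵀX))²]`. -/
noncomputable def quadRisk {p : ℕ} (P : Measure ((Fin p → ℝ) × ℝ))
    (θ : Fin p → ℝ) (f : ℝ → ℝ) : ℝ :=
  ∫ z, (z.2 - f (∑ j, θ j * z.1 j)) ^ 2 ∂P

section OrthogonalNoise

variable {α : Type*} {m mα : MeasurableSpace α} {μ : Measure α}

lemma MeasureTheory.Integrable.pow_mul_of_ae_abs_le {D V : α → ℝ} {b : ℝ} (hV : Integrable V μ)
    (hD : AEStronglyMeasurable D μ) (hDb : ∀ᵐ x ∂μ, |D x| ≤ b) (k : ℕ) :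
    Integrable (fun x => D x ^ k * V x) μ :=
  hV.bdd_mul (hD.pow k) <| by
    filter_upwards [hDb] with x hx
    rw [Real.norm_eq_abs, abs_pow]
    exact pow_le_pow_left₀ (abs_nonneg _) hx k

variable [IsFiniteMeasure μ]

lemma integrable_pow_of_ae_abs_le {D : α → ℝ} {b : ℝ} (hD : AEStronglyMeasurable D μ)
    (hDb : ∀ᵐ x ∂μ, |D x| ≤ b) (k : ℕ) : Integrable (fun x => D x ^ k) μ :=
  .of_bound (hD.pow k) (b ^ k) <| by
    filter_upwards [hDb] with x hx
    rw [Real.norm_eq_abs, abs_pow]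
    exact pow_le_pow_left₀ (abs_nonneg _) hx k

lemma integral_mul_eq_zero_of_condExp_eq_zero (hm : m ≤ mα) {g W : α → ℝ}
    (hg : StronglyMeasurable[m] g) (hgW : Integrable (g * W) μ) (hW : Integrable W μ)
    (hW0 : μ[W | m] =ᵐ[μ] 0) : ∫ x, g x * W x ∂μ = 0 := by
  have hpull : μ[g * W | m] =ᵐ[μ] 0 := by
    filter_upwards [condExp_mul_of_stronglyMeasurable_left hg hgW hW, hW0] with x h1 h2
    simp [h1, h2]
  calc ∫ x, g x * W x ∂μ = ∫ x, μ[g * W | m] x ∂μ := (integral_condExp hm).symm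
    _ = 0 := by simp [integral_congr_ae hpull]

lemma integral_mul_le_of_condExp_le (hm : m ≤ mα) {g V : α → ℝ} {s : ℝ}
    (hg : StronglyMeasurable[m] g) (hg0 : 0 ≤ g) (hgi : Integrable g μ)
    (hgV : Integrable (g * V) μ) (hV : Integrable V μ) (hVs : μ[V | m] ≤ᵐ[μ] fun _ => s) :
    ∫ x, g x * V x ∂μ ≤ s * ∫ x, g x ∂μ := by
  have hpull := condExp_mul_of_stronglyMeasurable_left hg hgV hV
  calc ∫ x, g x * V x ∂μ = ∫ x, (g * μ[V | m]) x ∂μ :=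
        (integral_condExp hm).symm.trans (integral_congr_ae hpull)
    _ ≤ ∫ x, s * g x ∂μ := by
        refine integral_mono_ae (integrable_condExp.congr hpull) (hgi.const_mul s) ?_
        filter_upwards [hVs] with x hx
        simpa only [Pi.mul_apply, mul_comm s] using mul_le_mul_of_nonneg_left hx (hg0 x)
    _ = s * ∫ x, g x ∂μ := integral_const_mul s _

variable {W D : α → ℝ} {b s : ℝ}

lemma integral_add_sq_sub_integral_sq (hm : m ≤ mα) (hW : MemLp W 2 μ)
    (hW0 : μ[W | m] =ᵐ[μ] 0) (hD : StronglyMeasurable[m] D) (hDb : ∀ᵐ x ∂μ, |D x| ≤ b) :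
    ∫ x, (W x + D x) ^ 2 ∂μ - ∫ x, W x ^ 2 ∂μ = ∫ x, D x ^ 2 ∂μ := by
  have hDμ : AEStronglyMeasurable D μ := (hD.mono hm).aestronglyMeasurable
  have hDW : Integrable (fun x => D x * W x) μ :=
    (hW.integrable one_le_two).bdd_mul hDμ (by simpa only [Real.norm_eq_abs] using hDb)
  have hD2 := integrable_pow_of_ae_abs_le hDμ hDb 2
  have hcross : ∫ x, D x * W x ∂μ = 0 :=
    integral_mul_eq_zero_of_condExp_eq_zero hm hD hDW (hW.integrable one_le_two) hW0
  have hrest : Integrable (fun x => 2 * (D x * W x) + D x ^ 2) μ := (hDW.const_mul 2).add hD2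
  have hexpand : (fun x => (W x + D x) ^ 2) = fun x => W x ^ 2 + (2 * (D x * W x) + D x ^ 2) :=
    funext fun x => by ring
  rw [hexpand, integral_add hW.integrable_sq hrest,
    integral_add (hDW.const_mul 2) hD2, integral_const_mul, hcross]
  ring

lemma integral_neg_add_sq_add_sq_sq_le (hm : m ≤ mα) (hW : MemLp W 2 μ)
    (hW0 : μ[W | m] =ᵐ[μ] 0) (hW2 : μ[fun x => W x ^ 2 | m] ≤ᵐ[μ] fun _ => s)
    (hD : StronglyMeasurable[m] D) (hDb : ∀ᵐ x ∂μ, |D x| ≤ b) :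
    ∫ x, (-(W x + D x) ^ 2 + W x ^ 2) ^ 2 ∂μ ≤ (b ^ 2 + 4 * s) * ∫ x, D x ^ 2 ∂μ := by
  have hDμ : AEStronglyMeasurable D μ := (hD.mono hm).aestronglyMeasurable
  have hD2 := integrable_pow_of_ae_abs_le hDμ hDb 2
  have hD4 := integrable_pow_of_ae_abs_le hDμ hDb 4
  have hD3W := (hW.integrable one_le_two).pow_mul_of_ae_abs_le hDμ hDb 3
  have hD2W2 := hW.integrable_sq.pow_mul_of_ae_abs_le hDμ hDb 2
  have hcross : ∫ x, D x ^ 3 * W x ∂μ = 0 :=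
    integral_mul_eq_zero_of_condExp_eq_zero hm (hD.pow 3) hD3W (hW.integrable one_le_two) hW0
  have hnoise : ∫ x, D x ^ 2 * W x ^ 2 ∂μ ≤ s * ∫ x, D x ^ 2 ∂μ :=
    integral_mul_le_of_condExp_le hm (hD.pow 2) (fun x => sq_nonneg (D x)) hD2 hD2W2
      hW.integrable_sq hW2
  have hquartic : ∫ x, D x ^ 4 ∂μ ≤ b ^ 2 * ∫ x, D x ^ 2 ∂μ := by
    rw [← integral_const_mul]
    refine integral_mono_ae hD4 (hD2.const_mul _) ?_
    filter_upwards [hDb] with x hx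
    have : D x ^ 2 ≤ b ^ 2 := sq_le_sq' (abs_le.mp hx).1 (abs_le.mp hx).2
    nlinarith [sq_nonneg (D x)]
  have hexpand : (fun x => (-(W x + D x) ^ 2 + W x ^ 2) ^ 2)
      = fun x => D x ^ 4 + (4 * (D x ^ 3 * W x) + 4 * (D x ^ 2 * W x ^ 2)) :=
    funext fun x => by ring
  have hrest : Integrable (fun x => 4 * (D x ^ 3 * W x) + 4 * (D x ^ 2 * W x ^ 2)) μ :=
    (hD3W.const_mul 4).add (hD2W2.const_mul 4)
  rw [hexpand, integral_add hD4 hrest,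
    integral_add (hD3W.const_mul 4) (hD2W2.const_mul 4), integral_const_mul,
    integral_const_mul, hcross]
  linarith

end OrthogonalNoise

section SingleIndex

variable {p : ℕ} {P : Measure ((Fin p → ℝ) × ℝ)}

lemma abs_sum_mul_le_sum_abs {θ x : Fin p → ℝ} (hx : ∀ j, |x j| ≤ 1) :
    |∑ j, θ j * x j| ≤ ∑ j, |θ j| :=
  (abs_sum_le_sum_abs _ _).trans <| sum_le_sum fun j _ => by
    rw [abs_mul]
    exact mul_le_of_le_one_right (abs_nonneg _) (hx j)

lemma ae_abs_comp_sum_mul_le (hBX : ∀ᵐ z ∂P, ∀ j, |z.1 j| ≤ 1) {θ : Fin p → ℝ}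
    (hθ : ∑ j, |θ j| ≤ 1) {g : ℝ → ℝ} {c : ℝ} (hg : ∀ t ∈ Icc (-1 : ℝ) 1, |g t| ≤ c) :
    ∀ᵐ z ∂P, |g (∑ j, θ j * z.1 j)| ≤ c := by
  filter_upwards [hBX] with z hz
  exact hg _ (abs_le.mp ((abs_sum_mul_le_sum_abs hz).trans hθ))

lemma measurable_comap_fst_comp_sum_mul (θ : Fin p → ℝ) {g : ℝ → ℝ} (hg : Measurable g) :
    Measurable[MeasurableSpace.comap Prod.fst inferInstance]
      fun z : (Fin p → ℝ) × ℝ => g (∑ j, θ j * z.1 j) :=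
  (hg.comp (by fun_prop : Measurable fun x : Fin p → ℝ => ∑ j, θ j * x j)).comp
    (comap_measurable Prod.fst)

lemma integral_excessLoss_sq_le [IsFiniteMeasure P]
    (hY2 : Integrable (fun z : (Fin p → ℝ) × ℝ => z.2 ^ 2) P) (hBX : ∀ᵐ z ∂P, ∀ j, |z.1 j| ≤ 1)
    {fstar f : ℝ → ℝ} (hfstar : Measurable fstar) (hf : Measurable f)
    {θstar θ : Fin p → ℝ} (hθstar : ∑ j, |θstar j| ≤ 1) (hθ : ∑ j, |θ j| ≤ 1)
    {cstar c s : ℝ} (hfstarBdd : ∀ t ∈ Icc (-1 : ℝ) 1, |fstar t| ≤ cstar)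
    (hfBdd : ∀ t ∈ Icc (-1 : ℝ) 1, |f t| ≤ c)
    (hmodel : P[(fun z : (Fin p → ℝ) × ℝ => z.2 - fstar (∑ j, θstar j * z.1 j)) |
        MeasurableSpace.comap Prod.fst inferInstance] =ᵐ[P] 0)
    (hnoise : P[(fun z : (Fin p → ℝ) × ℝ => (z.2 - fstar (∑ j, θstar j * z.1 j)) ^ 2) |
        MeasurableSpace.comap Prod.fst inferInstance] ≤ᵐ[P] fun _ => s) :
    ∫ z, (-(z.2 - f (∑ j, θ j * z.1 j)) ^ 2 + (z.2 - fstar (∑ j, θstar j * z.1 j)) ^ 2) ^ 2 ∂P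
      ≤ ((cstar + c) ^ 2 + 4 * s) * (quadRisk P θ f - quadRisk P θstar fstar) := by
  have hm : MeasurableSpace.comap (Prod.fst : (Fin p → ℝ) × ℝ → Fin p → ℝ) inferInstance ≤
      Prod.instMeasurableSpace :=
    measurable_fst.comap_le
  have hstar_m := measurable_comap_fst_comp_sum_mul θstar hfstar
  have hstarb := ae_abs_comp_sum_mul_le hBX hθstar hfstarBdd
  have hW : MemLp (fun z => z.2 - fstar (∑ j, θstar j * z.1 j)) 2 P :=
    ((memLp_two_iff_integrable_sq measurable_snd.aestronglyMeasurable).mpr hY2).sub <|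
      .of_bound (hstar_m.mono hm le_rfl).aestronglyMeasurable cstar
        (by simpa only [Real.norm_eq_abs] using hstarb)
  have hD := (hstar_m.sub (measurable_comap_fst_comp_sum_mul θ hf)).stronglyMeasurable
  have hDb : ∀ᵐ z ∂P, |fstar (∑ j, θstar j * z.1 j) - f (∑ j, θ j * z.1 j)| ≤ cstar + c := by
    filter_upwards [hstarb, ae_abs_comp_sum_mul_le hBX hθ hfBdd] with z h1 h2
    exact (abs_sub _ _).trans (add_le_add h1 h2)
  have hrisk := integral_add_sq_sub_integral_sq hm hW hmodel hD hDb
  have hT := integral_neg_add_sq_add_sq_sq_le hm hW hmodel hnoise hD hDb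
  -- `W + D = Y − f(θᵀX)`
  simp only [Pi.sub_apply, sub_add_sub_cancel] at hrisk hT
  rwa [quadRisk, quadRisk, hrisk]

end SingleIndex

theorem excess_loss_second_moment_bound_general
    (p n : ℕ) (P : Measure ((Fin p → ℝ) × ℝ)) [IsProbabilityMeasure P]
    (hY2 : Integrable (fun z : (Fin p → ℝ) × ℝ => z.2 ^ 2) P)
    (σ L C : ℝ)
    (fstar : ℝ → ℝ) (hfstarMeas : Measurable fstar)
    (θstar : Fin p → ℝ) (hθstar : θstar ∈ Sp1plus p)
    -- the model : `E[W | X] = 0` where `W = Y − f*(θ*ᵀX)`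
    (hmodel : P[(fun z : (Fin p → ℝ) × ℝ => z.2 - fstar (∑ j, θstar j * z.1 j)) |
        MeasurableSpace.comap Prod.fst inferInstance] =ᵐ[P] 0)
    -- Assumption N
    (hN : ∀ k : ℕ, 2 ≤ k →
      P[(fun z : (Fin p → ℝ) × ℝ => |z.2 - fstar (∑ j, θstar j * z.1 j)| ^ k) |
          MeasurableSpace.comap Prod.fst inferInstance] ≤ᵐ[P]
        fun _ => (Nat.factorial k : ℝ) / 2 * σ ^ 2 * L ^ (k - 2))
    -- Assumption B
    (hBX : ∀ᵐ z ∂P, ∀ j, |z.1 j| ≤ 1)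
    (hBf : ∀ t ∈ Set.Icc (-1 : ℝ) 1, |fstar t| ≤ C)
    -- the fixed pair `(θ, f)` with `‖f‖_∞ ≤ C + 1`
    (θ : Fin p → ℝ) (hθ : θ ∈ Sp1plus p)
    (f : ℝ → ℝ) (hfMeas : Measurable f) (hfBdd : ∀ t ∈ Set.Icc (-1 : ℝ) 1, |f t| ≤ C + 1) :
    ∑ i : Fin n,
        ∫ d, (-((d i).2 - f (∑ j, θ j * (d i).1 j)) ^ 2 +
              ((d i).2 - fstar (∑ j, θstar j * (d i).1 j)) ^ 2) ^ 2
          ∂(Measure.pi fun _ : Fin n => P) ≤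
      2 * n * ((2 * C + 1) ^ 2 + 4 * σ ^ 2) *
        (quadRisk P θ f - quadRisk P θstar fstar) := by
  have hnoise : P[(fun z : (Fin p → ℝ) × ℝ => (z.2 - fstar (∑ j, θstar j * z.1 j)) ^ 2) |
      MeasurableSpace.comap Prod.fst inferInstance] ≤ᵐ[P] fun _ => σ ^ 2 := by
    simpa [sq_abs, Nat.factorial] using hN 2 le_rfl
  have hT := integral_excessLoss_sq_le hY2 hBX hfstarMeas hfMeas hθstar.1.le hθ.1.le hBf hfBdd
    hmodel hnoise
  rw [show C + (C + 1) = 2 * C + 1 by ring] at hT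
  have hT0 : 0 ≤ ∫ z, (-(z.2 - f (∑ j, θ j * z.1 j)) ^ 2 +
      (z.2 - fstar (∑ j, θstar j * z.1 j)) ^ 2) ^ 2 ∂P :=
    integral_nonneg fun z => sq_nonneg _
  simp only [integral_comp_eval (μ := fun _ : Fin n => P) (by fun_prop : Measurable fun z :
      (Fin p → ℝ) × ℝ => (-(z.2 - f (∑ j, θ j * z.1 j)) ^ 2 +
        (z.2 - fstar (∑ j, θstar j * z.1 j)) ^ 2) ^ 2).aestronglyMeasurable,
    sum_const, card_univ, Fintype.card_fin, nsmul_eq_mul]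
  nlinarith [(Nat.cast_nonneg n : (0 : ℝ) ≤ n)]

/-- **Second-moment bound for excess-loss variables.** Under the single-index model
`Y = f*(θ*ᵀX) + W` with `E[W|X] = 0`, Assumption N (conditional moments of `W`) and
Assumption B (`‖X‖_∞ ≤ 1` a.s., `‖f*‖_∞ ≤ C`, `C ≥ 1`), for any `θ ∈ S^p_{1,+}` and
measurable `f` bounded by `C + 1`, the i.i.d. variables
`T_i = −(Y_i − f(θᵀX_i))² + (Y_i − f*(θ*ᵀX_i))²` satisfy
`∑_{i=1}^n E[T_i²] ≤ 2n[(2C+1)² + 4σ²] (R(θ,f) − R(θ*,f*))`. -/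
theorem excess_loss_second_moment_bound
    (p n : ℕ) (P : Measure ((Fin p → ℝ) × ℝ)) [IsProbabilityMeasure P]
    (hY2 : Integrable (fun z : (Fin p → ℝ) × ℝ => z.2 ^ 2) P)
    (σ L C : ℝ) (hσ : 0 < σ) (hL : 0 < L) (hC : 1 ≤ C)
    (fstar : ℝ → ℝ) (hfstarMeas : Measurable fstar)
    (θstar : Fin p → ℝ) (hθstar : θstar ∈ Sp1plus p)
    -- the model : `E[W | X] = 0` where `W = Y − f*(θ*ᵀX)`
    (hmodel : P[(fun z : (Fin p → ℝ) × ℝ => z.2 - fstar (∑ j, θstar j * z.1 j)) |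
        MeasurableSpace.comap Prod.fst inferInstance] =ᵐ[P] 0)
    -- Assumption N
    (hN : ∀ k : ℕ, 2 ≤ k →
      P[(fun z : (Fin p → ℝ) × ℝ => |z.2 - fstar (∑ j, θstar j * z.1 j)| ^ k) |
          MeasurableSpace.comap Prod.fst inferInstance] ≤ᵐ[P]
        fun _ => (Nat.factorial k : ℝ) / 2 * σ ^ 2 * L ^ (k - 2))
    -- Assumption B
    (hBX : ∀ᵐ z ∂P, ∀ j, |z.1 j| ≤ 1)
    (hBf : ∀ t ∈ Set.Icc (-1 : ℝ) 1, |fstar t| ≤ C)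
    -- the fixed pair `(θ, f)` with `‖f‖_∞ ≤ C + 1`
    (θ : Fin p → ℝ) (hθ : θ ∈ Sp1plus p)
    (f : ℝ → ℝ) (hfMeas : Measurable f) (hfBdd : ∀ t ∈ Set.Icc (-1 : ℝ) 1, |f t| ≤ C + 1) :
    ∑ i : Fin n,
        ∫ d, (-((d i).2 - f (∑ j, θ j * (d i).1 j)) ^ 2 +
              ((d i).2 - fstar (∑ j, θstar j * (d i).1 j)) ^ 2) ^ 2
          ∂(Measure.pi fun _ : Fin n => P) ≤
      2 * n * ((2 * C + 1) ^ 2 + 4 * σ ^ 2) *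
        (quadRisk P θ f - quadRisk P θstar fstar) :=
  excess_loss_second_moment_bound_general p n P hY2 σ L C fstar hfstarMeas θstar hθstar hmodel hN
    hBX hBf θ hθ f hfMeas hfBdd
end

section
/- Lower bound on the uniform measure of ℓ1-balls on the simplex. Let d ≥ 1, let FA = {θ ∈ ℝ_+^d : Σ_{j=1}^d θ_j = 1} be the standard simplex face, and let ν be the uniform probability measure on FA. Then for every θ̃ ∈ FA and every η > 0, setting u = min(1/d, η/2), one has ν( {θ ∈ FA : ‖θ − θ̃‖₁ ≤ η} ) ≥ u^{d−1}. Equivalently, the ℓ1-ball of radius η around θ̃ intersected with FA contains a homothetic copy of FA with ratio u, whose uniform measure equals u^{d−1}. -/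
open MeasureTheory Finset Set
open scoped NNReal ENNReal

/-- **Lower bound on the uniform measure of ℓ1-balls on the simplex.** Let
`FA = {θ ∈ ℝ₊^d : ∑ θ_j = 1}` and let `ν` be the uniform probability measure on `FA`
(normalized `(d−1)`-dimensional Hausdorff measure restricted to `FA`). Then for every
`θ̃ ∈ FA` and `η > 0`, with `u = min (1/d) (η/2)`,
`ν {θ ∈ FA : ‖θ − θ̃‖₁ ≤ η} ≥ u^(d−1)`. -/
theorem simplex_uniform_measure_l1_ball_lower_bound
    (d : ℕ) (hd : 1 ≤ d)
    (θt : Fin d → ℝ)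
    (hθt : θt ∈ {θ : Fin d → ℝ | (∀ j, 0 ≤ θ j) ∧ ∑ j, θ j = 1})
    (η : ℝ) (hη : 0 < η) :
    ((μH[(d : ℝ) - 1] {θ : Fin d → ℝ | (∀ j, 0 ≤ θ j) ∧ ∑ j, θ j = 1})⁻¹ •
        (μH[(d : ℝ) - 1]).restrict {θ : Fin d → ℝ | (∀ j, 0 ≤ θ j) ∧ ∑ j, θ j = 1})
      {θ : Fin d → ℝ | ((∀ j, 0 ≤ θ j) ∧ ∑ j, θ j = 1) ∧ ∑ j, |θ j - θt j| ≤ η} ≥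
    ENNReal.ofReal (min (1 / (d : ℝ)) (η / 2) ^ (d - 1)) := by
  obtain ⟨n, rfl⟩ : ∃ n, d = n + 1 := ⟨d - 1, (Nat.succ_pred_eq_of_pos hd).symm⟩
  clear hd
  rw [show ((n + 1 : ℕ) : ℝ) - 1 = ((n : ℕ) : ℝ) by push_cast; ring]
  rw [show (n + 1 - 1 : ℕ) = n by omega]
  set S : Set (Fin (n+1) → ℝ) := {θ | (∀ j, 0 ≤ θ j) ∧ ∑ j, θ j = 1} with hSdef
  set B : Set (Fin (n+1) → ℝ) :=
    {θ | ((∀ j, 0 ≤ θ j) ∧ ∑ j, θ j = 1) ∧ ∑ j, |θ j - θt j| ≤ η} with hBdef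
  have hθt0 : ∀ j, 0 ≤ θt j := hθt.1
  have hθt1 : ∑ j, θt j = 1 := hθt.2
  -- the projection dropping the last coordinate
  set π : (Fin (n+1) → ℝ) → (Fin n → ℝ) := fun θ i => θ i.castSucc with hπ
  have hπlip : LipschitzWith 1 π := by
    refine LipschitzWith.of_dist_le_mul fun a b => ?_
    rw [NNReal.coe_one, one_mul]
    exact (dist_pi_le_iff dist_nonneg).2 fun i => dist_le_pi_dist a b _
  -- the section adding the missing coordinate
  set g : (Fin n → ℝ) → (Fin (n+1) → ℝ) := fun x => Fin.snoc x (1 - ∑ i, x i) with hg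
  have hglip : LipschitzWith ((n+1 : ℕ) : ℝ≥0) g := by
    refine LipschitzWith.of_dist_le_mul fun a b => ?_
    refine (dist_pi_le_iff (by positivity)).2 fun j => ?_
    refine Fin.lastCases ?_ ?_ j
    · simp only [hg, Fin.snoc_last]
      rw [Real.dist_eq]
      have h1 : |1 - ∑ i, a i - (1 - ∑ i, b i)| = |∑ i, (b i - a i)| := by
        rw [Finset.sum_sub_distrib]; ring_nf
      rw [h1]
      calc |∑ i, (b i - a i)| ≤ ∑ i, |b i - a i| := Finset.abs_sum_le_sum_abs _ _
        _ ≤ ∑ _i : Fin n, dist a b := by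
            refine Finset.sum_le_sum fun i _ => ?_
            rw [abs_sub_comm]
            exact dist_le_pi_dist a b i
        _ = (n : ℝ) * dist a b := by simp [mul_comm]
        _ ≤ ((n+1 : ℕ) : ℝ) * dist a b := by
            have := dist_nonneg (x := a) (y := b)
            push_cast; nlinarith
    · intro i
      simp only [hg, Fin.snoc_castSucc]
      calc dist (a i) (b i) ≤ dist a b := dist_le_pi_dist a b i
        _ ≤ ((n+1 : ℕ) : ℝ) * dist a b := by
            have := dist_nonneg (x := a) (y := b)
            push_cast; nlinarith
  have hvol : (μH[(n : ℝ)] : Measure (Fin n → ℝ)) = volume := by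
    have h := hausdorffMeasure_pi_real (ι := Fin n)
    simpa using h
  have hgπ : ∀ θ ∈ S, g (π θ) = θ := by
    intro θ hθ
    have hsum := hθ.2
    rw [Fin.sum_univ_castSucc] at hsum
    funext j
    refine Fin.lastCases ?_ (fun i => ?_) j
    · simp only [hg, hπ, Fin.snoc_last]
      linarith
    · simp only [hg, hπ, Fin.snoc_castSucc]
  -- finiteness of the Hausdorff measure of the simplex
  have hSsub : S ⊆ g '' (Set.pi univ fun _ : Fin n => Icc (0:ℝ) 1) := by
    intro θ hθ
    refine ⟨π θ, fun i _ => ?_, hgπ θ hθ⟩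
    constructor
    · exact hθ.1 _
    · calc θ i.castSucc ≤ ∑ j, θ j :=
          Finset.single_le_sum (fun j _ => hθ.1 j) (Finset.mem_univ _)
        _ = 1 := hθ.2
  have hSfin : μH[(n : ℝ)] S ≠ ⊤ := by
    refine ne_top_of_le_ne_top ?_ ((measure_mono hSsub).trans
      (hglip.hausdorffMeasure_image_le (by positivity) _))
    rw [hvol]
    have hv : volume (Set.pi univ fun _ : Fin n => Icc (0:ℝ) 1) = 1 := by
      rw [volume_pi_pi]; simp
    rw [hv, mul_one]
    exact (ENNReal.rpow_lt_top_of_nonneg (by positivity) ENNReal.coe_ne_top).ne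
  -- positivity of the Hausdorff measure of the simplex
  have hSpos : 0 < μH[(n : ℝ)] S := by
    set Δ : Set (Fin n → ℝ) := Set.pi univ fun _ : Fin n => Ioo (0:ℝ) (1/(n+1)) with hΔ
    have hΔsub : Δ ⊆ π '' S := by
      intro x hx
      have hx' : ∀ i, x i ∈ Ioo (0:ℝ) (1/(n+1)) := fun i => hx i (Set.mem_univ i)
      have hsum : ∑ i, x i ≤ (n : ℝ) * (1/(n+1)) := by
        calc ∑ i, x i ≤ ∑ _i : Fin n, (1/(n+1) : ℝ) :=
            Finset.sum_le_sum fun i _ => (hx' i).2.le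
          _ = (n : ℝ) * (1/(n+1)) := by simp [mul_comm]
      have hlt : (n : ℝ) * (1/(n+1)) < 1 := by
        rw [mul_one_div, div_lt_one (by positivity)]
        linarith
      refine ⟨g x, ⟨?_, ?_⟩, ?_⟩
      · intro j
        refine Fin.lastCases ?_ (fun i => ?_) j
        · simp only [hg, Fin.snoc_last]
          linarith
        · simp only [hg, Fin.snoc_castSucc]
          exact (hx' i).1.le
      · rw [Fin.sum_univ_castSucc]
        simp only [hg, Fin.snoc_castSucc, Fin.snoc_last]
        ring
      · funext i
        simp only [hπ, hg, Fin.snoc_castSucc]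
    have hΔvol : 0 < volume Δ := by
      rw [hΔ, volume_pi_pi]
      simp only [Real.volume_Ioo, sub_zero]
      rw [Finset.prod_const]
      refine ENNReal.pow_pos (ENNReal.ofReal_pos.2 (by positivity)) _
    calc (0 : ℝ≥0∞) < volume Δ := hΔvol
      _ = μH[(n : ℝ)] Δ := by rw [hvol]
      _ ≤ μH[(n : ℝ)] (π '' S) := measure_mono hΔsub
      _ ≤ (1 : ℝ≥0∞) ^ (n : ℝ) * μH[(n : ℝ)] S :=
          hπlip.hausdorffMeasure_image_le (by positivity) S
      _ = μH[(n : ℝ)] S := by rw [ENNReal.one_rpow, one_mul]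
  -- the homothety
  set u : ℝ := min (1 / ((n+1 : ℕ) : ℝ)) (η / 2) with hu
  have hu0 : 0 < u := lt_min (by positivity) (by positivity)
  have hu1 : u ≤ 1 := by
    refine (min_le_left _ _).trans ?_
    rw [div_le_one (by positivity)]
    push_cast; linarith [Nat.cast_nonneg (α := ℝ) n]
  have huη : u ≤ η / 2 := min_le_right _ _
  set T : (Fin (n+1) → ℝ) → (Fin (n+1) → ℝ) := fun θ => AffineMap.homothety θt u θ with hT
  have hTapp : ∀ θ j, T θ j = u * (θ j - θt j) + θt j := by
    intro θ j
    simp [hT, AffineMap.homothety_apply, Pi.smul_apply, smul_eq_mul]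
  have hTS : T '' S ⊆ B := by
    rintro _ ⟨θ, hθ, rfl⟩
    have h0 : ∀ j, 0 ≤ θ j := hθ.1
    have h1 : ∑ j, θ j = 1 := hθ.2
    refine ⟨⟨fun j => ?_, ?_⟩, ?_⟩
    · rw [hTapp]
      have := h0 j; have := hθt0 j
      nlinarith
    · have : ∑ j, T θ j = ∑ j, (u * (θ j - θt j) + θt j) := by
        refine Finset.sum_congr rfl fun j _ => ?_
        rw [hTapp]
      rw [this, Finset.sum_add_distrib, ← Finset.mul_sum, Finset.sum_sub_distrib, h1, hθt1]
      ring
    · have habs : ∀ j, |T θ j - θt j| = u * |θ j - θt j| := by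
        intro j
        rw [hTapp]
        rw [show u * (θ j - θt j) + θt j - θt j = u * (θ j - θt j) by ring]
        rw [abs_mul, abs_of_nonneg hu0.le]
      calc ∑ j, |T θ j - θt j| = u * ∑ j, |θ j - θt j| := by
            rw [Finset.mul_sum]; exact Finset.sum_congr rfl fun j _ => habs j
        _ ≤ u * 2 := by
            refine mul_le_mul_of_nonneg_left ?_ hu0.le
            calc ∑ j, |θ j - θt j| ≤ ∑ j, (θ j + θt j) := by
                  refine Finset.sum_le_sum fun j _ => ?_
                  rw [abs_sub_comm]
                  calc |θt j - θ j| ≤ |θt j| + |θ j| := abs_sub _ _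
                    _ = θt j + θ j := by
                        rw [abs_of_nonneg (hθt0 j), abs_of_nonneg (h0 j)]
                    _ = θ j + θt j := by ring
              _ = 2 := by rw [Finset.sum_add_distrib, h1, hθt1]; norm_num
        _ ≤ η := by linarith
  have hTmeas : μH[(n : ℝ)] (T '' S) = (‖u‖₊ : ℝ≥0∞) ^ (n : ℝ) * μH[(n : ℝ)] S := by
    have := MeasureTheory.hausdorffMeasure_homothety_image (𝕜 := ℝ)
      (P := Fin (n+1) → ℝ) (d := (n : ℝ)) (by positivity) θt (c := u) hu0.ne' S
    rw [this]
    simp [ENNReal.smul_def, ENNReal.coe_rpow_of_nonneg _ (by positivity : (0:ℝ) ≤ (n:ℝ))]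
  -- measurability of S
  have hSmeas : MeasurableSet S := by
    have : S = (⋂ j, {θ : Fin (n+1) → ℝ | 0 ≤ θ j}) ∩ {θ : Fin (n+1) → ℝ | ∑ j, θ j = 1} := by
      ext θ
      simp only [hSdef, Set.mem_setOf_eq, Set.mem_inter_iff, Set.mem_iInter]
    rw [this]
    refine MeasurableSet.inter (MeasurableSet.iInter fun j => ?_) ?_
    · exact measurableSet_le measurable_const (measurable_pi_apply j)
    · exact measurableSet_eq_fun (by fun_prop) measurable_const
  have hBS : B ⊆ S := fun θ hθ => hθ.1
  -- final computation
  rw [Measure.smul_apply, Measure.restrict_apply' hSmeas, Set.inter_eq_left.2 hBS, smul_eq_mul]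
  have key : (‖u‖₊ : ℝ≥0∞) ^ (n : ℝ) * μH[(n : ℝ)] S ≤ μH[(n : ℝ)] B := by
    rw [← hTmeas]
    exact measure_mono hTS
  calc ENNReal.ofReal (u ^ n) = (‖u‖₊ : ℝ≥0∞) ^ (n : ℝ) := by
        rw [ENNReal.ofReal_pow hu0.le, ← ENNReal.rpow_natCast]
        congr 1
        rw [ENNReal.ofReal, Real.toNNReal_eq_nnnorm_of_nonneg hu0.le]
    _ = (μH[(n : ℝ)] S)⁻¹ * ((‖u‖₊ : ℝ≥0∞) ^ (n : ℝ) * μH[(n : ℝ)] S) := by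
        rw [mul_comm ((‖u‖₊ : ℝ≥0∞) ^ (n : ℝ)) _, ← mul_assoc,
          ENNReal.inv_mul_cancel hSpos.ne' hSfin, one_mul]
    _ ≤ (μH[(n : ℝ)] S)⁻¹ * μH[(n : ℝ)] B :=
        mul_le_mul_right key _
end
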